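/- arXiv:2305.06618 — 2 statements merged into one kernel-verified Lean document; each statement's English description precedes it below -/
import Mathlib

section
/- Let x = χ + ξ where χ and ξ are mean-zero random vectors in ℝⁿ with E(χξ') = 0, Var(χ) = C, Var(ξ) = Γ − C with Γ positive definite. Let Z be an n×r matrix of generalized eigenvectors of (C, Γ) with C Z = Γ Z M* and Z' Γ Z = I_r. Then the estimator χ̃ = Γ Z M* Z' x has estimation-error covariance E[(χ − χ̃)(χ − χ̃)'] = C − C Z Z' C. -/
open Matrix MeasureTheory

/-- Mean square estimation error of the finite-`n`, rank-`r` optimal linear estimator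
`χ̃ = Γ Z M* Zᵀ x` of the common component:
`E[(χ − χ̃)(χ − χ̃)ᵀ] = C − C Z Zᵀ C`. -/
theorem stmt_5 {Ω : Type*} [MeasurableSpace Ω] (P : Measure Ω)
    {n r : ℕ} (χ ξ : Ω → Fin n → ℝ)
    (C Γ : Matrix (Fin n) (Fin n) ℝ) (Z : Matrix (Fin n) (Fin r) ℝ)
    (Mstar : Matrix (Fin r) (Fin r) ℝ)
    (hΓ : Γ.PosDef) (hC : C.PosSemidef) (hΓC : (Γ - C).PosSemidef)
    (hint_χχ : ∀ i j, Integrable (fun ω => χ ω i * χ ω j) P)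
    (hint_ξξ : ∀ i j, Integrable (fun ω => ξ ω i * ξ ω j) P)
    (hint_χξ : ∀ i j, Integrable (fun ω => χ ω i * ξ ω j) P)
    (hmeanχ : ∀ i, ∫ ω, χ ω i ∂P = 0)
    (hmeanξ : ∀ i, ∫ ω, ξ ω i ∂P = 0)
    (hcross : ∀ i j, ∫ ω, χ ω i * ξ ω j ∂P = 0)
    (hvarχ : ∀ i j, ∫ ω, χ ω i * χ ω j ∂P = C i j)
    (hvarξ : ∀ i j, ∫ ω, ξ ω i * ξ ω j ∂P = (Γ - C) i j)
    (hgev : C * Z = Γ * Z * Mstar)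
    (hnorm : Zᵀ * Γ * Z = 1) :
    ∀ i j,
      ∫ ω, (χ ω i - (Γ * Z * Mstar * Zᵀ).mulVec (fun k => χ ω k + ξ ω k) i) *
           (χ ω j - (Γ * Z * Mstar * Zᵀ).mulVec (fun k => χ ω k + ξ ω k) j) ∂P
        = (C - C * Z * Zᵀ * C) i j := by
  have hCsymm : Cᵀ = C := by
    simpa using hC.isHermitian.eq
  have hA : Γ * Z * Mstar * Zᵀ = C * Z * Zᵀ := by rw [hgev]
  set A : Matrix (Fin n) (Fin n) ℝ := C * Z * Zᵀ with hAdef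
  intro i j
  rw [hA]
  -- integrability helpers
  have hint_ξχ : ∀ a b, Integrable (fun ω => ξ ω a * χ ω b) P := by
    intro a b; simpa [mul_comm] using hint_χξ b a
  have hint_x : ∀ a b, Integrable (fun ω => (χ ω a + ξ ω a) * (χ ω b + ξ ω b)) P := by
    intro a b
    have h : (fun ω => (χ ω a + ξ ω a) * (χ ω b + ξ ω b))
        = fun ω => χ ω a * χ ω b + χ ω a * ξ ω b + (ξ ω a * χ ω b + ξ ω a * ξ ω b) := by
      funext ω; ring
    rw [h]
    exact ((hint_χχ a b).add (hint_χξ a b)).add ((hint_ξχ a b).add (hint_ξξ a b))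
  have hint_χx : ∀ a b, Integrable (fun ω => χ ω a * (χ ω b + ξ ω b)) P := by
    intro a b
    have h : (fun ω => χ ω a * (χ ω b + ξ ω b)) = fun ω => χ ω a * χ ω b + χ ω a * ξ ω b := by
      funext ω; ring
    rw [h]; exact (hint_χχ a b).add (hint_χξ a b)
  have hint_xχ : ∀ a b, Integrable (fun ω => (χ ω a + ξ ω a) * χ ω b) P := by
    intro a b
    have h : (fun ω => (χ ω a + ξ ω a) * χ ω b) = fun ω => χ ω b * (χ ω a + ξ ω b + (ξ ω a - ξ ω b)) := by
      funext ω; ring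
    simpa [mul_comm] using hint_χx b a
  -- expectation helpers
  have hE_x : ∀ a b, ∫ ω, (χ ω a + ξ ω a) * (χ ω b + ξ ω b) ∂P = Γ a b := by
    intro a b
    have h : (fun ω => (χ ω a + ξ ω a) * (χ ω b + ξ ω b))
        = fun ω => χ ω a * χ ω b + χ ω a * ξ ω b + (ξ ω a * χ ω b + ξ ω a * ξ ω b) := by
      funext ω; ring
    have g12 : Integrable (fun ω => χ ω a * χ ω b + χ ω a * ξ ω b) P :=
      (hint_χχ a b).add (hint_χξ a b)
    have g34 : Integrable (fun ω => ξ ω a * χ ω b + ξ ω a * ξ ω b) P :=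
      (hint_ξχ a b).add (hint_ξξ a b)
    rw [h, integral_add g12 g34,
      integral_add (hint_χχ a b) (hint_χξ a b), integral_add (hint_ξχ a b) (hint_ξξ a b)]
    have hξχ : ∫ ω, ξ ω a * χ ω b ∂P = 0 := by
      simpa [mul_comm] using hcross b a
    rw [hvarχ a b, hcross a b, hξχ, hvarξ a b]
    simp [Matrix.sub_apply]
  have hE_χx : ∀ a b, ∫ ω, χ ω a * (χ ω b + ξ ω b) ∂P = C a b := by
    intro a b
    have h : (fun ω => χ ω a * (χ ω b + ξ ω b)) = fun ω => χ ω a * χ ω b + χ ω a * ξ ω b := by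
      funext ω; ring
    rw [h, integral_add (hint_χχ a b) (hint_χξ a b), hvarχ a b, hcross a b, add_zero]
  have hE_xχ : ∀ a b, ∫ ω, (χ ω a + ξ ω a) * χ ω b ∂P = C b a := by
    intro a b
    have h : (fun ω => (χ ω a + ξ ω a) * χ ω b) = fun ω => χ ω b * (χ ω a + ξ ω a) :=
      funext fun ω => mul_comm _ _
    rw [h]; exact hE_χx b a
  -- pointwise expansion of the integrand
  have hexp : (fun ω => (χ ω i - A.mulVec (fun k => χ ω k + ξ ω k) i) *
        (χ ω j - A.mulVec (fun k => χ ω k + ξ ω k) j))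
      = fun ω => χ ω i * χ ω j
        - ∑ l, A j l * (χ ω i * (χ ω l + ξ ω l))
        - ∑ k, A i k * ((χ ω k + ξ ω k) * χ ω j)
        + ∑ k, ∑ l, A i k * A j l * ((χ ω k + ξ ω k) * (χ ω l + ξ ω l)) := by
    funext ω
    simp only [Matrix.mulVec, dotProduct]
    have e1 : χ ω i * ∑ l, A j l * (χ ω l + ξ ω l)
        = ∑ l, A j l * (χ ω i * (χ ω l + ξ ω l)) := by
      rw [Finset.mul_sum]; exact Finset.sum_congr rfl fun l _ => by ring
    have e2 : (∑ k, A i k * (χ ω k + ξ ω k)) * χ ω j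
        = ∑ k, A i k * ((χ ω k + ξ ω k) * χ ω j) := by
      rw [Finset.sum_mul]; exact Finset.sum_congr rfl fun k _ => by ring
    have e3 : (∑ k, A i k * (χ ω k + ξ ω k)) * (∑ l, A j l * (χ ω l + ξ ω l))
        = ∑ k, ∑ l, A i k * A j l * ((χ ω k + ξ ω k) * (χ ω l + ξ ω l)) := by
      rw [Finset.sum_mul_sum]
      exact Finset.sum_congr rfl fun k _ => Finset.sum_congr rfl fun l _ => by ring
    calc (χ ω i - ∑ k, A i k * (χ ω k + ξ ω k)) * (χ ω j - ∑ l, A j l * (χ ω l + ξ ω l))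
        = χ ω i * χ ω j - χ ω i * ∑ l, A j l * (χ ω l + ξ ω l)
          - (∑ k, A i k * (χ ω k + ξ ω k)) * χ ω j
          + (∑ k, A i k * (χ ω k + ξ ω k)) * (∑ l, A j l * (χ ω l + ξ ω l)) := by ring
      _ = _ := by rw [e1, e2, e3]
  rw [hexp]
  -- integrability of the pieces
  have int1 : Integrable (fun ω => ∑ l, A j l * (χ ω i * (χ ω l + ξ ω l))) P :=
    integrable_finset_sum _ fun l _ => (hint_χx i l).const_mul _
  have int2 : Integrable (fun ω => ∑ k, A i k * ((χ ω k + ξ ω k) * χ ω j)) P :=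
    integrable_finset_sum _ fun k _ => (hint_xχ k j).const_mul _
  have int3 : Integrable (fun ω => ∑ k, ∑ l,
      A i k * A j l * ((χ ω k + ξ ω k) * (χ ω l + ξ ω l))) P :=
    integrable_finset_sum _ fun k _ => integrable_finset_sum _ fun l _ => (hint_x k l).const_mul _
  have intA : Integrable (fun ω => χ ω i * χ ω j
      - ∑ l, A j l * (χ ω i * (χ ω l + ξ ω l))) P := (hint_χχ i j).sub int1
  have intB : Integrable (fun ω => χ ω i * χ ω j
      - ∑ l, A j l * (χ ω i * (χ ω l + ξ ω l))
      - ∑ k, A i k * ((χ ω k + ξ ω k) * χ ω j)) P := intA.sub int2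
  rw [integral_add intB int3, integral_sub intA int2, integral_sub (hint_χχ i j) int1]
  have I1 : ∫ ω, ∑ l, A j l * (χ ω i * (χ ω l + ξ ω l)) ∂P = ∑ l, A j l * C i l := by
    rw [integral_finset_sum _ fun l _ => (hint_χx i l).const_mul _]
    exact Finset.sum_congr rfl fun l _ => by rw [integral_const_mul _ _, hE_χx]
  have I2 : ∫ ω, ∑ k, A i k * ((χ ω k + ξ ω k) * χ ω j) ∂P = ∑ k, A i k * C j k := by
    rw [integral_finset_sum _ fun k _ => (hint_xχ k j).const_mul _]
    exact Finset.sum_congr rfl fun k _ => by rw [integral_const_mul _ _, hE_xχ]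
  have I3 : ∫ ω, ∑ k, ∑ l, A i k * A j l * ((χ ω k + ξ ω k) * (χ ω l + ξ ω l)) ∂P
      = ∑ k, ∑ l, A i k * A j l * Γ k l := by
    rw [integral_finset_sum _ fun k _ =>
      integrable_finset_sum _ fun l _ => (hint_x k l).const_mul _]
    refine Finset.sum_congr rfl fun k _ => ?_
    rw [integral_finset_sum _ fun l _ => (hint_x k l).const_mul _]
    exact Finset.sum_congr rfl fun l _ => by rw [integral_const_mul _ _, hE_x]
  rw [hvarχ i j, I1, I2, I3]
  -- matrix-entry identifications
  have hm1 : ∑ l, A j l * C i l = (C * Aᵀ) i j := by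
    rw [Matrix.mul_apply]
    exact Finset.sum_congr rfl fun l _ => by rw [Matrix.transpose_apply, mul_comm]
  have hm2 : ∑ k, A i k * C j k = (A * Cᵀ) i j := by
    rw [Matrix.mul_apply]
    exact Finset.sum_congr rfl fun k _ => by rw [Matrix.transpose_apply]
  have hm3 : ∑ k, ∑ l, A i k * A j l * Γ k l = (A * Γ * Aᵀ) i j := by
    rw [Matrix.mul_assoc, Matrix.mul_apply]
    refine Finset.sum_congr rfl fun k _ => ?_
    rw [Matrix.mul_apply, Finset.mul_sum]
    exact Finset.sum_congr rfl fun l _ => by rw [Matrix.transpose_apply]; ring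
  rw [hm1, hm2, hm3]
  -- final matrix identity
  have hcanc : ∀ W : Matrix (Fin r) (Fin n) ℝ, Zᵀ * (Γ * (Z * W)) = W := by
    intro W
    rw [← Matrix.mul_assoc Γ Z W, ← Matrix.mul_assoc Zᵀ (Γ * Z) W, ← Matrix.mul_assoc Zᵀ Γ Z,
      hnorm, Matrix.one_mul]
  have hfinal : C - C * Aᵀ - A * Cᵀ + A * Γ * Aᵀ = C - C * Z * Zᵀ * C := by
    rw [hAdef, hCsymm]
    simp only [Matrix.transpose_mul, Matrix.transpose_transpose, hCsymm, Matrix.mul_assoc, hcanc]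
    abel
  have := congrFun (congrFun hfinal i) j
  simpa [Matrix.sub_apply, Matrix.add_apply] using this
end

section
/- In the setting above, let μ_j^{χ*}(n) denote the j-th largest eigenvalue of Q_χ = M_x^{-1/2} S' Γ₀^χ S M_x^{-1/2}. Then for j = 1,...,r: μ_j^{χ*}(n) ≤ 1 and μ_j^{χ*}(n) ≥ μ_j^χ(n)/μ₁^x(n); moreover if additionally μ_j^χ(n)/μ₁^x(n) → 1, then μ_j^{χ*}(n) → 1 as n → ∞. -/
open Matrix Filter

variable {n : ℕ}

private lemma orth_mulVec_inj {M N : Matrix (Fin n) (Fin n) ℝ} (h : N * M = 1) :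
    Function.Injective (M.mulVec) := by
  intro x y hxy
  have := congrArg (N.mulVec) hxy
  simpa [Matrix.mulVec_mulVec, h] using this

private lemma dot_self_pos {x : Fin n → ℝ} (hx : x ≠ 0) : 0 < x ⬝ᵥ x := by
  rcases lt_or_eq_of_le (Finset.sum_nonneg fun i _ => mul_self_nonneg (x i) :
      (0:ℝ) ≤ x ⬝ᵥ x) with h | h
  · exact h
  · exact absurd (dotProduct_self_eq_zero.mp h.symm) hx

private lemma core (n j : ℕ) (hj : j < n)
    (Γχ Γξ Sx U Sχ : Matrix (Fin n) (Fin n) ℝ)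
    (μχ μx μstar : Fin n → ℝ)
    (hχpsd : Γχ.PosSemidef)
    (hξpsd : Γξ.PosSemidef)
    (hSχorth : Sχᵀ * Sχ = 1 ∧ Sχ * Sχᵀ = 1)
    (hχdec : Γχ = Sχ * Matrix.diagonal μχ * Sχᵀ)
    (hSxorth : Sxᵀ * Sx = 1 ∧ Sx * Sxᵀ = 1)
    (hxdec : Γχ + Γξ = Sx * Matrix.diagonal μx * Sxᵀ)
    (hχmono : Antitone μχ) (hxmono : Antitone μx)
    (hxpos : ∀ i : Fin n, 0 < μx i)
    (hUorth : Uᵀ * U = 1 ∧ U * Uᵀ = 1)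
    (hQdec : Matrix.diagonal (fun i => (Real.sqrt (μx i))⁻¹) * Sxᵀ * Γχ * Sx *
          Matrix.diagonal (fun i => (Real.sqrt (μx i))⁻¹)
        = U * Matrix.diagonal μstar * Uᵀ)
    (hstarmono : Antitone μstar) (h0 : 0 < n) :
    μstar ⟨j, hj⟩ ≤ 1 ∧ μχ ⟨j, hj⟩ / μx ⟨0, h0⟩ ≤ μstar ⟨j, hj⟩ := by
  set jj : Fin n := ⟨j, hj⟩
  set z : Fin n := ⟨0, h0⟩
  set b : Fin n → ℝ := fun i => (Real.sqrt (μx i))⁻¹ with hb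
  set B : Matrix (Fin n) (Fin n) ℝ := Matrix.diagonal b with hB
  set Binv : Matrix (Fin n) (Fin n) ℝ := Matrix.diagonal (fun i => Real.sqrt (μx i)) with hBinv
  have hsqrt : ∀ i, Real.sqrt (μx i) * Real.sqrt (μx i) = μx i := fun i =>
    Real.mul_self_sqrt (hxpos i).le
  have hsqrtpos : ∀ i, 0 < Real.sqrt (μx i) := fun i => Real.sqrt_pos.mpr (hxpos i)
  have hBBinv : B * Binv = 1 := by
    have h1 : (fun i => b i * Real.sqrt (μx i)) = fun _ : Fin n => (1:ℝ) :=
      funext fun i => inv_mul_cancel₀ (hsqrtpos i).ne'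
    rw [hB, hBinv, Matrix.diagonal_mul_diagonal, h1, Matrix.diagonal_one]
  have hBinvB : Binv * B = 1 := by
    have h1 : (fun i => Real.sqrt (μx i) * b i) = fun _ : Fin n => (1:ℝ) :=
      funext fun i => mul_inv_cancel₀ (hsqrtpos i).ne'
    rw [hB, hBinv, Matrix.diagonal_mul_diagonal, h1, Matrix.diagonal_one]
  set Q : Matrix (Fin n) (Fin n) ℝ := U * Matrix.diagonal μstar * Uᵀ with hQ
  have hsum : Sxᵀ * Γχ * Sx + Sxᵀ * Γξ * Sx = Matrix.diagonal μx := by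
    have h2 : Sxᵀ * (Γχ + Γξ) * Sx = Matrix.diagonal μx := by
      rw [hxdec]
      calc Sxᵀ * (Sx * Matrix.diagonal μx * Sxᵀ) * Sx
          = (Sxᵀ * Sx) * Matrix.diagonal μx * (Sxᵀ * Sx) := by noncomm_ring
        _ = Matrix.diagonal μx := by rw [hSxorth.1, one_mul, mul_one]
    rw [← h2]; noncomm_ring
  have hBdB : B * Matrix.diagonal μx * B = 1 := by
    have h1 : (fun i => b i * μx i * b i) = fun _ : Fin n => (1:ℝ) := by
      funext i
      have hne := (hsqrtpos i).ne'
      rw [hb, ← hsqrt i]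
      field_simp
    rw [hB, Matrix.diagonal_mul_diagonal, Matrix.diagonal_mul_diagonal, h1, Matrix.diagonal_one]
  have hQxi : (1 : Matrix (Fin n) (Fin n) ℝ) - Q = B * (Sxᵀ * Γξ * Sx) * B := by
    have hX : B * (Sxᵀ * Γχ * Sx) * B = Q := by rw [← hQdec]; noncomm_ring
    have h2 : Q + B * (Sxᵀ * Γξ * Sx) * B = 1 := by
      rw [← hX]
      calc B * (Sxᵀ * Γχ * Sx) * B + B * (Sxᵀ * Γξ * Sx) * B
          = B * (Sxᵀ * Γχ * Sx + Sxᵀ * Γξ * Sx) * B := by noncomm_ring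
        _ = 1 := by rw [hsum, hBdB]
    rw [← h2]; abel
  have hpsd1Q : ((1 : Matrix (Fin n) (Fin n) ℝ) - Q).PosSemidef := by
    rw [hQxi]
    have h3 := hξpsd.conjTranspose_mul_mul_same (Sx * B)
    have hct : (Sx * B)ᴴ = B * Sxᵀ := by
      rw [Matrix.conjTranspose_eq_transpose_of_trivial, Matrix.transpose_mul, hB,
        Matrix.diagonal_transpose]
    rw [hct] at h3
    convert h3 using 1
    rw [hB]; noncomm_ring
  -- column j of U
  set u : Fin n → ℝ := fun i => U i jj with hu
  have hUTu : Uᵀ *ᵥ u = Pi.single jj 1 := by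
    funext k
    have h1 := congrFun (congrFun hUorth.1 k) jj
    simp only [Matrix.mul_apply, Matrix.one_apply, Matrix.transpose_apply] at h1
    simpa [Matrix.mulVec, dotProduct, Matrix.transpose_apply, hu,
      Pi.single_apply, eq_comm] using h1
  have huu : u ⬝ᵥ u = 1 := by
    have h1 := congrFun (congrFun hUorth.1 jj) jj
    simp only [Matrix.mul_apply, Matrix.one_apply, Matrix.transpose_apply] at h1
    simpa [dotProduct, hu] using h1
  have hdot_mulVec : ∀ (d : Fin n → ℝ) (M : Matrix (Fin n) (Fin n) ℝ) (w : Fin n → ℝ),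
      d ⬝ᵥ (Mᵀ *ᵥ w) = (M *ᵥ d) ⬝ᵥ w := by
    intro d M w
    rw [Matrix.dotProduct_mulVec, Matrix.vecMul_transpose]
  have hquad : ∀ (S : Matrix (Fin n) (Fin n) ℝ) (ν : Fin n → ℝ) (x : Fin n → ℝ),
      x ⬝ᵥ ((S * Matrix.diagonal ν * Sᵀ) *ᵥ x)
        = (Sᵀ *ᵥ x) ⬝ᵥ (Matrix.diagonal ν *ᵥ (Sᵀ *ᵥ x)) := by
    intro S ν x
    rw [← Matrix.mulVec_mulVec (M := S * Matrix.diagonal ν), ← Matrix.mulVec_mulVec,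
      Matrix.dotProduct_mulVec, ← Matrix.mulVec_transpose]
  have huQu : u ⬝ᵥ (Q *ᵥ u) = μstar jj := by
    rw [hQ, hquad, hUTu]
    simp [Matrix.mulVec_diagonal, dotProduct, Pi.single_apply]
  have hupper : μstar jj ≤ 1 := by
    have h4 := hpsd1Q.dotProduct_mulVec_nonneg u
    simp only [star_trivial] at h4
    rw [Matrix.sub_mulVec, dotProduct_sub, Matrix.one_mulVec, huu, huQu] at h4
    linarith
  refine ⟨hupper, ?_⟩
  -- lower bound: subspace argument
  set T : Matrix (Fin n) (Fin n) ℝ := Sxᵀ * Sχ with hT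
  have hTT : Tᵀ * T = 1 := by
    rw [hT, Matrix.transpose_mul, Matrix.transpose_transpose]
    calc Sχᵀ * Sx * (Sxᵀ * Sχ) = Sχᵀ * (Sx * Sxᵀ) * Sχ := by noncomm_ring
      _ = 1 := by rw [hSxorth.2, mul_one]; exact hSχorth.1
  have hΓ' : Sxᵀ * Γχ * Sx = T * Matrix.diagonal μχ * Tᵀ := by
    rw [hχdec, hT, Matrix.transpose_mul, Matrix.transpose_transpose]; noncomm_ring
  set A : Matrix (Fin n) (Fin n) ℝ := Binv * T with hA
  have hAinj : Function.Injective (A.mulVec) := by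
    apply orth_mulVec_inj (N := Tᵀ * B)
    rw [hA]
    calc Tᵀ * B * (Binv * T) = Tᵀ * (B * Binv) * T := by noncomm_ring
      _ = 1 := by rw [hBBinv, mul_one, hTT]
  have hUinj : Function.Injective (U.mulVec) := orth_mulVec_inj hUorth.1
  let ι₁ : (Fin (j+1) → ℝ) →ₗ[ℝ] (Fin n → ℝ) :=
    { toFun := fun c i => if h : (i : ℕ) < j + 1 then c ⟨i, h⟩ else 0
      map_add' := by
        intro c c'; funext i
        by_cases h : (i : ℕ) < j + 1 <;> (simp only [Nat.lt_succ_iff] at h; simp [h])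
      map_smul' := by
        intro m c; funext i
        by_cases h : (i : ℕ) < j + 1 <;> (simp only [Nat.lt_succ_iff] at h; simp [h]) }
  let ι₂ : (Fin (n - j) → ℝ) →ₗ[ℝ] (Fin n → ℝ) :=
    { toFun := fun c i => if h : j ≤ (i : ℕ) then c ⟨(i : ℕ) - j, by have := i.2; omega⟩ else 0
      map_add' := by
        intro c c'; funext i
        by_cases h : j ≤ (i : ℕ) <;> simp [h]
      map_smul' := by
        intro m c; funext i
        by_cases h : j ≤ (i : ℕ) <;> simp [h] }
  have hι₁inj : Function.Injective ι₁ := by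
    intro c c' h
    funext k
    have h5 := congrFun h ⟨(k : ℕ), lt_of_lt_of_le k.2 hj⟩
    simpa [ι₁, Fin.is_le k] using h5
  have hι₂inj : Function.Injective ι₂ := by
    intro c c' h
    funext k
    have hk : (k : ℕ) + j < n := by have := k.2; omega
    have h5 := congrFun h ⟨(k : ℕ) + j, hk⟩
    simpa [ι₂] using h5
  set V : Submodule ℝ (Fin n → ℝ) := LinearMap.range (A.mulVecLin ∘ₗ ι₁) with hV
  set W : Submodule ℝ (Fin n → ℝ) := LinearMap.range (U.mulVecLin ∘ₗ ι₂) with hW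
  have hVrank : Module.finrank ℝ V = j + 1 := by
    rw [hV, LinearMap.finrank_range_of_inj]
    · exact Module.finrank_fin_fun ℝ
    · exact fun x y hxy => hι₁inj (hAinj (by simpa [Matrix.mulVecLin_apply] using hxy))
  have hWrank : Module.finrank ℝ W = n - j := by
    rw [hW, LinearMap.finrank_range_of_inj]
    · exact Module.finrank_fin_fun ℝ
    · exact fun x y hxy => hι₂inj (hUinj (by simpa [Matrix.mulVecLin_apply] using hxy))
  have hinter : ∃ x : Fin n → ℝ, x ∈ V ⊓ W ∧ x ≠ 0 := by
    have hsum' := Submodule.finrank_sup_add_finrank_inf_eq V W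
    have hle : Module.finrank ℝ ↥(V ⊔ W) ≤ n := by
      have h6 := Submodule.finrank_le (V ⊔ W)
      simpa [Module.finrank_fin_fun] using h6
    have hpos : 0 < Module.finrank ℝ ↥(V ⊓ W) := by
      rw [hVrank, hWrank] at hsum'
      omega
    have : Nontrivial ↥(V ⊓ W) := Module.nontrivial_of_finrank_pos hpos
    obtain ⟨x, hx⟩ := exists_ne (0 : ↥(V ⊓ W))
    exact ⟨(x : Fin n → ℝ), x.2, by simpa [Submodule.coe_eq_zero] using hx⟩
  obtain ⟨x, ⟨hxV, hxW⟩, hxne⟩ := hinter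
  have hμχ0 : 0 ≤ μχ jj := by
    have hD : Sχᵀ * Γχ * Sχ = Matrix.diagonal μχ := by
      rw [hχdec]
      calc Sχᵀ * (Sχ * Matrix.diagonal μχ * Sχᵀ) * Sχ
          = (Sχᵀ * Sχ) * Matrix.diagonal μχ * (Sχᵀ * Sχ) := by noncomm_ring
        _ = Matrix.diagonal μχ := by rw [hSχorth.1, one_mul, mul_one]
    have hpsd : (Matrix.diagonal μχ).PosSemidef := by
      rw [← hD]
      have h7 := hχpsd.conjTranspose_mul_mul_same Sχ
      rwa [Matrix.conjTranspose_eq_transpose_of_trivial] at h7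
    exact Matrix.posSemidef_diagonal_iff.mp hpsd jj
  have hlowV : μχ jj / μx z * (x ⬝ᵥ x) ≤ x ⬝ᵥ (Q *ᵥ x) := by
    obtain ⟨c, hc⟩ := hxV
    rw [LinearMap.comp_apply, Matrix.mulVecLin_apply] at hc
    set d : Fin n → ℝ := ι₁ c with hd
    have hdzero : ∀ i : Fin n, ¬ ((i : ℕ) < j + 1) → d i = 0 := by
      intro i hi
      simp [hd, ι₁, hi, show ¬ (i : ℕ) ≤ j by omega]
    have hBx : B *ᵥ x = T *ᵥ d := by
      rw [← hc, hA, Matrix.mulVec_mulVec, ← mul_assoc, hBBinv, one_mul]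
    have hxQx : x ⬝ᵥ (Q *ᵥ x) = ∑ i, μχ i * (d i * d i) := by
      have e1 : Q = B * (T * Matrix.diagonal μχ * Tᵀ) * B := by
        rw [← hQdec, ← hΓ']; noncomm_ring
      have e2 : x ⬝ᵥ (Q *ᵥ x)
          = (B *ᵥ x) ⬝ᵥ ((T * Matrix.diagonal μχ * Tᵀ) *ᵥ (B *ᵥ x)) := by
        rw [e1, ← Matrix.mulVec_mulVec (M := B * (T * Matrix.diagonal μχ * Tᵀ)),
          ← Matrix.mulVec_mulVec, Matrix.dotProduct_mulVec]
        congr 1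
        rw [hB, ← Matrix.diagonal_transpose, Matrix.vecMul_transpose,
          Matrix.diagonal_transpose]
      rw [e2, hBx, hquad]
      have e3 : Tᵀ *ᵥ (T *ᵥ d) = d := by
        rw [Matrix.mulVec_mulVec, hTT, Matrix.one_mulVec]
      rw [e3]
      simp only [dotProduct, Matrix.mulVec_diagonal]
      exact Finset.sum_congr rfl fun i _ => by ring
    have hdd : d ⬝ᵥ d = (B *ᵥ x) ⬝ᵥ (B *ᵥ x) := by
      rw [hBx, ← hdot_mulVec, Matrix.mulVec_mulVec, hTT, Matrix.one_mulVec]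
    have hdd2 : (μx z)⁻¹ * (x ⬝ᵥ x) ≤ d ⬝ᵥ d := by
      rw [hdd]
      have hBxi : ∀ i : Fin n, (B *ᵥ x) i = b i * x i := by
        intro i; rw [hB, Matrix.mulVec_diagonal]
      simp only [dotProduct, hBxi, Finset.mul_sum]
      apply Finset.sum_le_sum
      intro i _
      have hbi : b i * b i = (μx i)⁻¹ := by
        rw [hb, ← mul_inv, hsqrt]
      have hle : (μx z)⁻¹ ≤ (μx i)⁻¹ := by
        apply inv_anti₀ (hxpos i)
        exact hxmono (Fin.mk_le_mk.mpr (Nat.zero_le _) : z ≤ i)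
      calc (μx z)⁻¹ * (x i * x i) ≤ (μx i)⁻¹ * (x i * x i) :=
            mul_le_mul_of_nonneg_right hle (mul_self_nonneg _)
        _ = b i * x i * (b i * x i) := by rw [← hbi]; ring
    have hsum2 : μχ jj * (d ⬝ᵥ d) ≤ ∑ i, μχ i * (d i * d i) := by
      simp only [dotProduct, Finset.mul_sum]
      apply Finset.sum_le_sum
      intro i _
      by_cases hi : (i : ℕ) < j + 1
      · apply mul_le_mul_of_nonneg_right _ (mul_self_nonneg _)
        have hij : i ≤ jj := by rw [Fin.le_def]; exact Nat.lt_succ_iff.mp hi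
        exact hχmono hij
      · rw [hdzero i hi]; simp
    rw [hxQx, div_eq_mul_inv]
    calc μχ jj * (μx z)⁻¹ * (x ⬝ᵥ x) = μχ jj * ((μx z)⁻¹ * (x ⬝ᵥ x)) := by ring
      _ ≤ μχ jj * (d ⬝ᵥ d) := mul_le_mul_of_nonneg_left hdd2 hμχ0
      _ ≤ ∑ i, μχ i * (d i * d i) := hsum2
  have hupW : x ⬝ᵥ (Q *ᵥ x) ≤ μstar jj * (x ⬝ᵥ x) := by
    obtain ⟨c, hc⟩ := hxW
    rw [LinearMap.comp_apply, Matrix.mulVecLin_apply] at hc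
    set d : Fin n → ℝ := ι₂ c with hd
    have hdzero : ∀ i : Fin n, ¬ (j ≤ (i : ℕ)) → d i = 0 := by
      intro i hi
      simp [hd, ι₂, hi]
    have hUTx : Uᵀ *ᵥ x = d := by
      rw [← hc, Matrix.mulVec_mulVec, hUorth.1, Matrix.one_mulVec]
    have hxQx : x ⬝ᵥ (Q *ᵥ x) = ∑ i, μstar i * (d i * d i) := by
      rw [hQ, hquad, hUTx]
      simp only [dotProduct, Matrix.mulVec_diagonal]
      exact Finset.sum_congr rfl fun i _ => by ring
    have hxx : x ⬝ᵥ x = d ⬝ᵥ d := by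
      rw [← hc, ← hdot_mulVec, Matrix.mulVec_mulVec, hUorth.1, Matrix.one_mulVec]
    rw [hxQx, hxx]
    simp only [dotProduct, Finset.mul_sum]
    apply Finset.sum_le_sum
    intro i _
    by_cases hi : j ≤ (i : ℕ)
    · apply mul_le_mul_of_nonneg_right _ (mul_self_nonneg _)
      have hij : jj ≤ i := by rw [Fin.le_def]; exact hi
      exact hstarmono hij
    · rw [hdzero i hi]; simp
  have hxxpos : 0 < x ⬝ᵥ x := dot_self_pos hxne
  exact le_of_mul_le_mul_right (hlowV.trans hupW) hxxpos
/-- Eigenvalues `μ_j^{χ*}(n)` of `Q_χ = M_x^{-1/2} Sᵀ Γ₀^χ S M_x^{-1/2}`.  For each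
`j = 1, …, r`: `μ_j^{χ*}(n) ≤ 1`, `μ_j^{χ*}(n) ≥ μ_j^χ(n)/μ₁^x(n)`; moreover, if
`μ_j^χ(n)/μ₁^x(n) → 1` then `μ_j^{χ*}(n) → 1` as `n → ∞`. -/
theorem stmt_9 (r : ℕ)
    (Γχ Γξ : ∀ n : ℕ, Matrix (Fin n) (Fin n) ℝ)
    (Sx U : ∀ n : ℕ, Matrix (Fin n) (Fin n) ℝ)
    (μχ μx μstar : ∀ n : ℕ, Fin n → ℝ)
    (Sχ : ∀ n : ℕ, Matrix (Fin n) (Fin n) ℝ)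
    (hχpsd : ∀ n, (Γχ n).PosSemidef)
    (hξpd : ∀ n, (Γξ n).PosDef)
    (hSχorth : ∀ n, (Sχ n)ᵀ * Sχ n = 1 ∧ Sχ n * (Sχ n)ᵀ = 1)
    (hχdec : ∀ n, Γχ n = Sχ n * Matrix.diagonal (μχ n) * (Sχ n)ᵀ)
    (hSxorth : ∀ n, (Sx n)ᵀ * Sx n = 1 ∧ Sx n * (Sx n)ᵀ = 1)
    (hxdec : ∀ n, Γχ n + Γξ n = Sx n * Matrix.diagonal (μx n) * (Sx n)ᵀ)
    (hχmono : ∀ n, Antitone (μχ n)) (hxmono : ∀ n, Antitone (μx n))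
    (hxpos : ∀ n (i : Fin n), 0 < μx n i)
    (hUorth : ∀ n, (U n)ᵀ * U n = 1 ∧ U n * (U n)ᵀ = 1)
    (hQdec : ∀ n,
      Matrix.diagonal (fun i => (Real.sqrt (μx n i))⁻¹) * (Sx n)ᵀ * Γχ n * Sx n *
          Matrix.diagonal (fun i => (Real.sqrt (μx n i))⁻¹)
        = U n * Matrix.diagonal (μstar n) * (U n)ᵀ)
    (hstarmono : ∀ n, Antitone (μstar n)) :
    ∀ j < r,
      (∀ n (hj : j < n) (h0 : 0 < n),
        μstar n ⟨j, hj⟩ ≤ 1 ∧ μχ n ⟨j, hj⟩ / μx n ⟨0, h0⟩ ≤ μstar n ⟨j, hj⟩) ∧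
      (Tendsto (fun n : ℕ =>
          if h : j < n then μχ n ⟨j, h⟩ / μx n ⟨0, Nat.pos_of_ne_zero (by omega)⟩ else 0)
          atTop (nhds 1) →
        Tendsto (fun n : ℕ => if h : j < n then μstar n ⟨j, h⟩ else 0)
          atTop (nhds 1)) := by
  intro j _
  have key : ∀ n (hj : j < n) (h0 : 0 < n),
      μstar n ⟨j, hj⟩ ≤ 1 ∧ μχ n ⟨j, hj⟩ / μx n ⟨0, h0⟩ ≤ μstar n ⟨j, hj⟩ :=
    fun n hj h0 =>
      core n j hj (Γχ n) (Γξ n) (Sx n) (U n) (Sχ n) (μχ n) (μx n) (μstar n)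
        (hχpsd n) (hξpd n).posSemidef (hSχorth n) (hχdec n) (hSxorth n) (hxdec n)
        (hχmono n) (hxmono n) (hxpos n) (hUorth n) (hQdec n) (hstarmono n) h0
  refine ⟨key, ?_⟩
  intro hg
  apply tendsto_of_tendsto_of_tendsto_of_le_of_le' hg
    (tendsto_const_nhds (x := (1 : ℝ)) (f := atTop))
  · filter_upwards [eventually_ge_atTop (j + 1)] with n hn
    have hjn : j < n := hn
    rw [dif_pos hjn, dif_pos hjn]
    exact (key n hjn (by omega)).2
  · filter_upwards [eventually_ge_atTop (j + 1)] with n hn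
    have hjn : j < n := hn
    rw [dif_pos hjn]
    exact (key n hjn (by omega)).1
end
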